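/- The sequence v_n = ∑_{k=0}^n C(2k,k)^2 * C(2(n-k), n-k) * 4^(n-k) satisfies the recurrence (n+2)^2 v_{n+2} = 4(8n^2+24n+19) v_{n+1} - 256(n+1)^2 v_n for all n ≥ 0. -/

import Mathlib

/-!
Creative telescoping. Write `v n = ∑_{k + m = n} a k * b m` with `a k = C(2k,k)^2` and
`b m = C(2m,m) 4^m`. Applied to a single term `a k * b m` (with `n = k + m`), the recurrence
operator equals `G (k + 1) m - G k (m + 1)` for the Zeilberger certificate
`G k m = 8 k^2 a k * Cat m * 4^m`, as one checks by dividing through by `a k * b m`: all the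
ratios involved are rational functions of `k` and `m`. Summed over the antidiagonal this
telescopes to `G (n + 1) 0 = 8 (n + 1)^2 a (n + 1)`, which cancels exactly against the terms of
`v (n + 1)` and `v (n + 2)` outside the antidiagonal of `n`.
-/

open Finset Nat

theorem Finset.Nat.sum_antidiagonal_telescope {M : Type*} [AddCommGroup M] (f : ℕ → ℕ → M)
    (n : ℕ) :
    ∑ p ∈ antidiagonal n, (f (p.1 + 1) p.2 - f p.1 (p.2 + 1)) = f (n + 1) 0 - f 0 (n + 1) := by
  have h₁ := sum_antidiagonal_succ (n := n) (f := fun p => f p.1 p.2)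
  have h₂ := sum_antidiagonal_succ' (n := n) (f := fun p => f p.1 p.2)
  rw [sum_sub_distrib]
  linear_combination (norm := skip) h₂ - h₁
  abel

theorem Nat.cast_centralBinom_succ {K : Type*} [Field K] [CharZero K] (n : ℕ) :
    (centralBinom (n + 1) : K) = 2 * (2 * n + 1) / (n + 1) * centralBinom n := by
  rw [div_mul_eq_mul_div, eq_div_iff n.cast_add_one_ne_zero, mul_comm]
  exact_mod_cast succ_mul_centralBinom_succ n

theorem Nat.cast_catalan {K : Type*} [Field K] [CharZero K] (n : ℕ) :
    (catalan n : K) = centralBinom n / (n + 1) := by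
  rw [eq_div_iff n.cast_add_one_ne_zero, mul_comm]
  exact_mod_cast succ_mul_catalan_eq_centralBinom n

namespace CentralBinomConvolution

def term (k m : ℕ) : ℤ := centralBinom k ^ 2 * centralBinom m * 4 ^ m

def seq (n : ℕ) : ℤ := ∑ p ∈ antidiagonal n, term p.1 p.2

def certificate (k m : ℕ) : ℤ := 8 * k ^ 2 * centralBinom k ^ 2 * catalan m * 4 ^ m

theorem term_recurrence (k m : ℕ) :
    (((k + m : ℕ) : ℤ) + 2) ^ 2 * term k (m + 2)
      - 4 * (8 * ((k + m : ℕ) : ℤ) ^ 2 + 24 * (k + m : ℕ) + 19) * term k (m + 1)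
      + 256 * (((k + m : ℕ) : ℤ) + 1) ^ 2 * term k m
    = certificate (k + 1) m - certificate k (m + 1) := by
  apply Int.cast_injective (α := ℚ)
  simp only [term, certificate, Int.cast_add, Int.cast_sub, Int.cast_mul, Int.cast_pow,
    Int.cast_natCast, Int.cast_ofNat, Nat.cast_add, Nat.cast_one]
  simp only [Nat.cast_centralBinom_succ, Nat.cast_catalan, Nat.cast_add, Nat.cast_one]
  field_simp
  ring

theorem sum_term_recurrence (n : ℕ) :
    ∑ p ∈ antidiagonal n, (((n : ℤ) + 2) ^ 2 * term p.1 (p.2 + 2)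
      - 4 * (8 * (n : ℤ) ^ 2 + 24 * n + 19) * term p.1 (p.2 + 1)
      + 256 * ((n : ℤ) + 1) ^ 2 * term p.1 p.2)
    = 8 * ((n : ℤ) + 1) ^ 2 * centralBinom (n + 1) ^ 2 := by
  calc _ = ∑ p ∈ antidiagonal n, (certificate (p.1 + 1) p.2 - certificate p.1 (p.2 + 1)) :=
        sum_congr rfl fun p hp => by rw [← term_recurrence, mem_antidiagonal.mp hp]
    _ = _ := by rw [sum_antidiagonal_telescope]; simp [certificate]

theorem seq_recurrence (n : ℕ) :
    ((n : ℤ) + 2) ^ 2 * seq (n + 2)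
      = 4 * (8 * (n : ℤ) ^ 2 + 24 * n + 19) * seq (n + 1) - 256 * ((n : ℤ) + 1) ^ 2 * seq n := by
  have hcb : ((n + 2 : ℕ) : ℤ) * centralBinom (n + 2)
      = 2 * (2 * (n + 1 : ℕ) + 1) * centralBinom (n + 1) := by
    exact_mod_cast succ_mul_centralBinom_succ (n + 1)
  push_cast at hcb
  have hsum := sum_term_recurrence n
  simp only [sum_add_distrib, sum_sub_distrib, ← mul_sum, term] at hsum
  simp only [seq, sum_antidiagonal_succ', term, centralBinom_zero, zero_add,
    show centralBinom 1 = 2 from rfl]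
  linear_combination hsum
    + (((n : ℤ) + 2) * centralBinom (n + 2) + 2 * (2 * n + 3) * centralBinom (n + 1)) * hcb

end CentralBinomConvolution

theorem stmt_16
    (v : ℕ → ℤ)
    (hv : ∀ n, v n = ∑ k ∈ Finset.range (n + 1),
      ((Nat.choose (2 * k) k : ℤ) ^ 2 * (Nat.choose (2 * (n - k)) (n - k)) * 4 ^ (n - k)))
    (n : ℕ) :
    ((n : ℤ) + 2) ^ 2 * v (n + 2)
      = 4 * (8 * (n : ℤ) ^ 2 + 24 * n + 19) * v (n + 1)
        - 256 * ((n : ℤ) + 1) ^ 2 * v n := by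
  have hv_eq_seq : v = CentralBinomConvolution.seq := funext fun n => by
    rw [hv, CentralBinomConvolution.seq, sum_antidiagonal_eq_sum_range_succ_mk]
    rfl
  subst hv_eq_seq
  exact CentralBinomConvolution.seq_recurrence n
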